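/- arXiv:2411.13924 — 2 statements merged into one kernel-verified Lean document; each statement's English description precedes it below -/
import Mathlib

section
/- Data-consistency of the identified model set: given noisy data from x(k+1) = A x(k) + B u(k) + H ε(k) + J ϑ(k) + ω(k), where each noise column ω(k) of W₋ lies in a zonotope Z_ω, and given that the stacked matrix [X₋; U₋; E₋; F₋] has full row rank, the true matrix [A B H J] belongs to the set (X₊ − M_ω)·[X₋; U₋; E₋; F₋]^†, where M_ω is the matrix zonotope whose columns range over Z_ω and † denotes the Moore–Penrose pseudoinverse. -/
/-- A zonotope in `ℝⁿ` with center `c` and generators `g i`. -/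
def zonotope {n : ℕ} {ι : Type*} [Fintype ι] (c : Fin n → ℝ) (g : ι → Fin n → ℝ) :
    Set (Fin n → ℝ) :=
  {x | ∃ β : ι → ℝ, (∀ i, |β i| ≤ 1) ∧ x = c + ∑ i, β i • g i}

/-- The Moore–Penrose pseudoinverse of a full row rank matrix: `M† = Mᵀ (M Mᵀ)⁻¹`. -/
noncomputable def pinv {T : ℕ} {ι : Type*} [Fintype ι] [DecidableEq ι]
    (M : Matrix ι (Fin T) ℝ) : Matrix (Fin T) ι ℝ :=
  M.transpose * (M * M.transpose)⁻¹

/-! The actual noise matrix `W₋` is the witness. The dynamics say exactly that `N M = X₊ − W₋`,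
and full row rank of `M` makes `M Mᵀ` invertible, so `M M† = 1` and hence
`N = N M M† = (X₊ − W₋) M†`. -/

namespace Matrix

variable {m n : Type*} [Fintype m] [DecidableEq m] [Fintype n]

theorem isUnit_of_rank_eq_card {K : Type*} [Field K] {S : Matrix m m K}
    (h : S.rank = Fintype.card m) : IsUnit S := by
  rw [← mulVec_surjective_iff_isUnit]
  refine LinearMap.range_eq_top.mp (Submodule.eq_top_of_finrank_eq (S := S.mulVecLin.range) ?_)
  rw [← rank, h, Module.finrank_fintype_fun_eq_card]

theorem isUnit_mul_transpose_of_rank_eq_card {K : Type*} [Field K] [LinearOrder K]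
    [IsStrictOrderedRing K] {M : Matrix m n K} (h : M.rank = Fintype.card m) :
    IsUnit (M * Mᵀ) :=
  isUnit_of_rank_eq_card (by rw [rank_self_mul_transpose, h])

end Matrix

section Pinv

variable {ι κ : Type*} [Fintype ι] [DecidableEq ι] {T : ℕ} {M : Matrix ι (Fin T) ℝ}

theorem mul_pinv_of_rank_eq_card (h : M.rank = Fintype.card ι) : M * pinv M = 1 := by
  rw [pinv, ← Matrix.mul_assoc]
  exact Matrix.mul_nonsing_inv _
    ((Matrix.isUnit_iff_isUnit_det _).mp (Matrix.isUnit_mul_transpose_of_rank_eq_card h))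

theorem eq_mul_pinv_of_mul_eq (h : M.rank = Fintype.card ι) {N : Matrix κ ι ℝ}
    {X : Matrix κ (Fin T) ℝ} (hNM : N * M = X) : N = X * pinv M := by
  rw [← hNM, Matrix.mul_assoc, mul_pinv_of_rank_eq_card h, Matrix.mul_one]

end Pinv

section LinearSystem

variable {m : ℕ} (T : ℕ)

def systemMatrix (A : Matrix (Fin m) (Fin m) ℝ) (B H J : Fin m → ℝ) :
    Matrix (Fin m) (Fin m ⊕ Fin 3) ℝ :=
  Matrix.of fun i j => Sum.elim (fun j' => A i j') (fun r => (![B i, H i, J i] : Fin 3 → ℝ) r) j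

def dataMatrix (x : ℕ → Fin m → ℝ) (u ε ϑ : ℕ → ℝ) : Matrix (Fin m ⊕ Fin 3) (Fin T) ℝ :=
  Matrix.of fun i k =>
    Sum.elim (fun j => x (k : ℕ) j) (fun r => (![u (k : ℕ), ε (k : ℕ), ϑ (k : ℕ)] : Fin 3 → ℝ) r) i

def trajectoryMatrix (v : ℕ → Fin m → ℝ) : Matrix (Fin m) (Fin T) ℝ :=
  Matrix.of fun i k => v (k : ℕ) i

variable {T} {A : Matrix (Fin m) (Fin m) ℝ} {B H J : Fin m → ℝ} {x ω : ℕ → Fin m → ℝ}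
  {u ε ϑ : ℕ → ℝ}

theorem systemMatrix_mul_dataMatrix
    (hdyn : ∀ k, x (k + 1) = A.mulVec (x k) + u k • B + ε k • H + ϑ k • J + ω k) :
    systemMatrix A B H J * dataMatrix T x u ε ϑ =
      trajectoryMatrix T (fun k => x (k + 1)) - trajectoryMatrix T ω := by
  ext i k
  simp only [systemMatrix, dataMatrix, trajectoryMatrix, Matrix.mul_apply, Matrix.of_apply,
    Fintype.sum_sum_type, Sum.elim_inl, Sum.elim_inr, Fin.sum_univ_three, Matrix.cons_val_zero,
    Matrix.cons_val_one, Matrix.cons_val, hdyn, Pi.add_apply, Matrix.mulVec, dotProduct,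
    Pi.smul_apply, smul_eq_mul, Matrix.sub_apply, add_sub_cancel_right]
  ring

end LinearSystem

/-- Data-consistency of the identified model set: if the data are generated by
`x(k+1) = A x(k) + B u(k) + H ε(k) + J ϑ(k) + ω(k)` with each noise column in the
zonotope `Z_ω`, and the stacked data matrix `M = [X₋; U₋; E₋; F₋]` has full row
rank, then the true matrix `N = [A B H J]` belongs to `(X₊ − M_ω) M†`, i.e. there
is a noise matrix `W` with all columns in `Z_ω` such that `N = (X₊ − W) M†`. -/
theorem model_set_consistency {n T γ : ℕ}
    (A : Matrix (Fin (2 * n)) (Fin (2 * n)) ℝ)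
    (B H J : Fin (2 * n) → ℝ)
    (x ω : ℕ → Fin (2 * n) → ℝ) (u ε ϑ : ℕ → ℝ)
    (cω : Fin (2 * n) → ℝ) (gω : Fin γ → Fin (2 * n) → ℝ)
    -- the system dynamics generating the data
    (hdyn : ∀ k : ℕ, x (k + 1) =
      A.mulVec (x k) + u k • B + ε k • H + ϑ k • J + ω k)
    -- each noise sample lies in the zonotope `Z_ω`
    (hω : ∀ k : ℕ, ω k ∈ zonotope cω gω)
    -- the stacked data matrix [X₋; U₋; E₋; F₋]
    (M : Matrix (Fin (2 * n) ⊕ Fin 3) (Fin T) ℝ)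
    (hM : M = Matrix.of fun (i : Fin (2 * n) ⊕ Fin 3) (k : Fin T) =>
      Sum.elim (fun j => x (k : ℕ) j) (fun r => (![u (k : ℕ), ε (k : ℕ), ϑ (k : ℕ)] : Fin 3 → ℝ) r) i)
    -- full row rank of the stacked data matrix
    (hrank : M.rank = 2 * n + 3)
    -- the shifted state data matrix X₊
    (Xp : Matrix (Fin (2 * n)) (Fin T) ℝ)
    (hXp : Xp = Matrix.of fun (i : Fin (2 * n)) (k : Fin T) => x ((k : ℕ) + 1) i)
    -- the true system matrix N = [A B H J]
    (N : Matrix (Fin (2 * n)) (Fin (2 * n) ⊕ Fin 3) ℝ)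
    (hN : N = Matrix.of fun (i : Fin (2 * n)) (j : Fin (2 * n) ⊕ Fin 3) =>
      Sum.elim (fun j' => A i j') (fun r => (![B i, H i, J i] : Fin 3 → ℝ) r) j) :
    ∃ W : Matrix (Fin (2 * n)) (Fin T) ℝ,
      (∀ k : Fin T, (fun i => W i k) ∈ zonotope cω gω) ∧
      N = (Xp - W) * pinv M := by
  subst hM hXp hN
  refine ⟨trajectoryMatrix T ω, fun k => hω k, ?_⟩
  exact eq_mul_pinv_of_mul_eq (by simpa using hrank) (systemMatrix_mul_dataMatrix hdyn)
end

section
/- Pontryagin difference of a box by a zonotope: if X = {x ∈ ℝⁿ : |xᵢ| ≤ mᵢ for all i} and Z = ⟨c,G⟩ is a zonotope with componentwise radius Δg = Σⱼ |g⁽ʲ⁾|, then the box {x : |xᵢ + cᵢ| ≤ mᵢ − Δgᵢ for all i} is contained in the Pontryagin difference X − Z (assuming mᵢ ≥ Δgᵢ). -/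
theorem abs_sum_mul_le_sum_abs_of_abs_le_one {ι : Type*} (s : Finset ι) {β a : ι → ℝ}
    (hβ : ∀ j, |β j| ≤ 1) : |∑ j ∈ s, β j * a j| ≤ ∑ j ∈ s, |a j| :=
  (Finset.abs_sum_le_sum_abs _ _).trans <| Finset.sum_le_sum fun j _ => by
    rw [abs_mul]
    exact mul_le_of_le_one_left (abs_nonneg _) (hβ j)

theorem abs_sub_center_le_of_mem_zonotope {n : ℕ} {ι : Type*} [Fintype ι]
    {c z : Fin n → ℝ} {g : ι → Fin n → ℝ} (hz : z ∈ zonotope c g) (i : Fin n) :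
    |z i - c i| ≤ ∑ j, |g j i| := by
  obtain ⟨β, hβ, rfl⟩ := hz
  simpa [Finset.sum_apply] using abs_sum_mul_le_sum_abs_of_abs_le_one Finset.univ hβ

theorem box_pontryagin_diff_zonotope_general {n γ : ℕ}
    (m : Fin n → ℝ) (c : Fin n → ℝ) (g : Fin γ → Fin n → ℝ) :
    {x : Fin n → ℝ | ∀ i, |x i + c i| ≤ m i - ∑ j, |g j i|} ⊆
      {x : Fin n → ℝ | ∀ z ∈ zonotope c g, x + z ∈ {y : Fin n → ℝ | ∀ i, |y i| ≤ m i}} := by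
  intro x hx z hz i
  have hzc := abs_sub_center_le_of_mem_zonotope hz i
  calc |(x + z) i| = |(x i + c i) + (z i - c i)| := by simp
    _ ≤ |x i + c i| + |z i - c i| := abs_add_le _ _
    _ ≤ m i := by linarith [hx i]

/-- Pontryagin difference of a box by a zonotope: with `X = {x : |xᵢ| ≤ mᵢ}`,
`Z = ⟨c,G⟩` and `Δgᵢ = Σⱼ |gᵢ⁽ʲ⁾|`, the box `{x : |xᵢ + cᵢ| ≤ mᵢ − Δgᵢ}` is
contained in `X − Z = {x : ∀ z ∈ Z, x + z ∈ X}`. -/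
theorem box_pontryagin_diff_zonotope {n γ : ℕ}
    (m : Fin n → ℝ) (c : Fin n → ℝ) (g : Fin γ → Fin n → ℝ)
    (hm : ∀ i, (∑ j, |g j i|) ≤ m i) :
    {x : Fin n → ℝ | ∀ i, |x i + c i| ≤ m i - ∑ j, |g j i|} ⊆
      {x : Fin n → ℝ | ∀ z ∈ zonotope c g, x + z ∈ {y : Fin n → ℝ | ∀ i, |y i| ≤ m i}} :=
  box_pontryagin_diff_zonotope_general m c g
end
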